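/- arXiv:1507.06181 — 6 statements merged into one kernel-verified Lean document; each statement's English description precedes it below -/
import Mathlib

section
/- Let q, r > 0 and let D = {z ∈ ℂ³ : |z₁|² + |z₂|^q < 1 and |z₁|² + |z₃|^r < 1}. For nonnegative integers α₁, α₂, α₃, the squared L² norm of the monomial z₁^{α₁} z₂^{α₂} z₃^{α₃} over D equals π³ Γ(α₁+1) Γ((2α₂+2)/q + (2α₃+2)/r + 1) / ((α₂+1)(α₃+1) Γ((2α₂+2)/q + (2α₃+2)/r + α₁ + 2)). -/
open Real MeasureTheory Complex Set

/-!
Fubini in `z₁`: for `‖z₁‖ < 1` the slice of the domain is the product of the discs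
`‖z₂‖ ^ q < c` and `‖z₃‖ ^ r < c` with `c = 1 - ‖z₁‖ ^ 2`, on which the radial integrals of
`‖z₂‖ ^ (2α₂)` and `‖z₃‖ ^ (2α₃)` are `2π c ^ ((2α₂ + 2) / q) / (2α₂ + 2)` and its analogue.
What is left is a radial integral over the unit disc, which the substitution `t = ‖z₁‖ ^ 2`
turns into the Beta integral `π B(α₁ + 1, (2α₂ + 2) / q + (2α₃ + 2) / r + 1)`.
-/

theorem integral_rpow_mul_one_sub_rpow {a b : ℝ} (ha : -1 < a) (hb : -1 < b) :
    ∫ t in (0:ℝ)..1, t ^ a * (1 - t) ^ b =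
      Real.Gamma (a + 1) * Real.Gamma (b + 1) / Real.Gamma (a + b + 2) := by
  have hbeta : (((∫ t in (0:ℝ)..1, t ^ a * (1 - t) ^ b : ℝ)) : ℂ) =
      betaIntegral ((a + 1 : ℝ) : ℂ) ((b + 1 : ℝ) : ℂ) := by
    rw [betaIntegral, ← intervalIntegral.integral_ofReal]
    refine intervalIntegral.integral_congr fun t ht => ?_
    rw [uIcc_of_le zero_le_one] at ht
    push_cast
    rw [add_sub_cancel_right, add_sub_cancel_right, ofReal_cpow ht.1,
      ← ofReal_one, ← ofReal_sub, ofReal_cpow (sub_nonneg.2 ht.2)]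
  have hGamma := Gamma_mul_Gamma_eq_betaIntegral (s := ((a + 1 : ℝ) : ℂ))
    (t := ((b + 1 : ℝ) : ℂ)) (by rw [ofReal_re]; linarith)
    (by rw [ofReal_re]; linarith)
  rw [← hbeta, ← ofReal_add, Gamma_ofReal, Gamma_ofReal, Gamma_ofReal] at hGamma
  have hpos : 0 < Real.Gamma (a + b + 2) := Real.Gamma_pos_of_pos (by linarith)
  rw [eq_div_iff hpos.ne', mul_comm, show a + b + 2 = a + 1 + (b + 1) by ring]
  exact_mod_cast hGamma.symm

namespace Complex

theorem integral_fun_norm (f : ℝ → ℝ) :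
    ∫ z : ℂ, f ‖z‖ = 2 * π * ∫ s in Ioi (0:ℝ), s * f s := by
  simpa [Complex.volume_ball, measureReal_def, mul_assoc] using
    integral_fun_norm_addHaar (volume : Measure ℂ) f

theorem setIntegral_ball_fun_norm (f : ℝ → ℝ) {R : ℝ} (hR : 0 ≤ R) :
    ∫ z in Metric.ball (0:ℂ) R, f ‖z‖ = 2 * π * ∫ s in (0:ℝ)..R, s * f s := by
  have hind : (Metric.ball (0:ℂ) R).indicator (fun z => f ‖z‖) =
      fun z => (Iio R).indicator f ‖z‖ := by
    ext z; by_cases h : ‖z‖ < R <;> simp [h]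
  have hmul : (fun s => s * (Iio R).indicator f s) = (Iio R).indicator fun s => s * f s := by
    ext s; by_cases h : s < R <;> simp [h]
  rw [← integral_indicator measurableSet_ball, hind, integral_fun_norm, hmul,
    setIntegral_indicator measurableSet_Iio, Ioi_inter_Iio,
    intervalIntegral.integral_of_le hR, integral_Ioc_eq_integral_Ioo]

theorem setIntegral_ball_norm_pow {R : ℝ} (hR : 0 ≤ R) (k : ℕ) :
    ∫ z in Metric.ball (0:ℂ) R, ‖z‖ ^ k = 2 * π * R ^ (k + 2) / (k + 2) := by
  rw [setIntegral_ball_fun_norm (· ^ k) hR]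
  simp only [← pow_succ', integral_pow]
  push_cast
  ring

theorem setIntegral_norm_rpow_lt_norm_pow {p c : ℝ} (hp : 0 < p) (hc : 0 < c) (k : ℕ) :
    ∫ z in {z : ℂ | ‖z‖ ^ p < c}, ‖z‖ ^ k = 2 * π * c ^ ((k + 2) / p) / (k + 2) := by
  have hball : {z : ℂ | ‖z‖ ^ p < c} = Metric.ball 0 (c ^ p⁻¹) := by
    ext z
    simp [lt_rpow_inv_iff_of_pos (norm_nonneg z) hc.le hp]
  rw [hball, setIntegral_ball_norm_pow (by positivity), ← rpow_natCast,
    ← rpow_mul hc.le]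
  push_cast
  rw [inv_mul_eq_div]

theorem setIntegral_ball_norm_pow_mul_one_sub_sq_rpow (m : ℕ) {b : ℝ} (hb : 0 ≤ b) :
    ∫ z in Metric.ball (0:ℂ) 1, ‖z‖ ^ (2 * m) * (1 - ‖z‖ ^ 2) ^ b =
      π * Real.Gamma (m + 1) * Real.Gamma (b + 1) / Real.Gamma (m + b + 2) := by
  have hsubst := intervalIntegral.integral_comp_mul_deriv (a := 0) (b := 1)
    (f := fun s : ℝ => s ^ 2) (g := fun t => t ^ m * (1 - t) ^ b)
    (fun s _ => by simpa using hasDerivAt_pow 2 s) (by fun_prop)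
    ((continuous_pow m).mul ((continuous_rpow_const hb).comp (continuous_sub_left 1)))
  have hradial : ∫ s in (0:ℝ)..1, s * (s ^ (2 * m) * (1 - s ^ 2) ^ b) =
      (∫ t in (0:ℝ)..1, t ^ (m : ℝ) * (1 - t) ^ b) / 2 := by
    rw [zero_pow two_ne_zero, one_pow] at hsubst
    simp only [rpow_natCast, ← hsubst, ← intervalIntegral.integral_div]
    refine intervalIntegral.integral_congr fun s _ => ?_
    simp only [Function.comp_apply, pow_mul]
    ring
  rw [setIntegral_ball_fun_norm (fun s => s ^ (2 * m) * (1 - s ^ 2) ^ b) zero_le_one, hradial,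
    integral_rpow_mul_one_sub_rpow (by linarith [m.cast_nonneg (α := ℝ)]) (by linarith)]
  ring

end Complex

theorem setIntegral_prod_eq_integral_setIntegral_slice {α β E : Type*} [MeasurableSpace α]
    [MeasurableSpace β] {μ : Measure α} {ν : Measure β} [SFinite μ] [SFinite ν]
    [NormedAddCommGroup E] [NormedSpace ℝ E] {s : Set (α × β)} (hs : MeasurableSet s)
    {f : α × β → E} (hf : IntegrableOn f s (μ.prod ν)) :
    ∫ z in s, f z ∂μ.prod ν = ∫ x, ∫ y in Prod.mk x ⁻¹' s, f (x, y) ∂ν ∂μ := by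
  rw [← integral_indicator hs, integral_prod _ (hf.integrable_indicator hs)]
  congr 1 with x
  rw [← integral_indicator (measurable_prodMk_left hs)]
  rfl

def D2 (q r : ℝ) : Set (ℂ × ℂ × ℂ) :=
  {z | ‖z.1‖ ^ (2:ℝ) + ‖z.2.1‖ ^ q < 1 ∧ ‖z.1‖ ^ (2:ℝ) + ‖z.2.2‖ ^ r < 1}

theorem measurableSet_D2 (q r : ℝ) : MeasurableSet (D2 q r) := by
  unfold D2
  measurability

theorem D2_subset_closedBall {q r : ℝ} (hq : 0 < q) (hr : 0 < r) :
    D2 q r ⊆ Metric.closedBall 0 1 := by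
  rintro ⟨z₁, z₂, z₃⟩ ⟨h₂, h₃⟩
  have := rpow_nonneg (norm_nonneg z₁) 2
  have := rpow_nonneg (norm_nonneg z₂) q
  have := rpow_nonneg (norm_nonneg z₃) r
  simp only [Metric.mem_closedBall, dist_zero_right, Prod.norm_def, max_le_iff]
  exact ⟨((rpow_lt_one_iff' (norm_nonneg z₁) two_pos).1 (by linarith)).le,
    ((rpow_lt_one_iff' (norm_nonneg z₂) hq).1 (by linarith)).le,
    ((rpow_lt_one_iff' (norm_nonneg z₃) hr).1 (by linarith)).le⟩

theorem preimage_mk_D2 (q r : ℝ) (z : ℂ) :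
    Prod.mk z ⁻¹' D2 q r = {w | ‖w‖ ^ q < 1 - ‖z‖ ^ 2} ×ˢ {w | ‖w‖ ^ r < 1 - ‖z‖ ^ 2} := by
  ext w
  simp [D2, lt_sub_iff_add_lt']

theorem setIntegral_preimage_mk_D2 {q r : ℝ} (hq : 0 < q) (hr : 0 < r) (j k l : ℕ) (z : ℂ) :
    ∫ w in Prod.mk z ⁻¹' D2 q r, ‖z‖ ^ j * (‖w.1‖ ^ k * ‖w.2‖ ^ l) =
      (Metric.ball 0 1).indicator (fun x : ℂ => 2 * π / (k + 2) * (2 * π / (l + 2)) *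
        (‖x‖ ^ j * (1 - ‖x‖ ^ 2) ^ ((k + 2) / q + (l + 2) / r))) z := by
  rw [preimage_mk_D2, integral_const_mul, Measure.volume_eq_prod,
    setIntegral_prod_mul (fun x : ℂ => ‖x‖ ^ k) (fun y : ℂ => ‖y‖ ^ l)]
  by_cases hz : ‖z‖ < 1
  · have hc : 0 < 1 - ‖z‖ ^ 2 := by nlinarith [norm_nonneg z]
    rw [indicator_of_mem (mem_ball_zero_iff.2 hz), Complex.setIntegral_norm_rpow_lt_norm_pow hq hc,
      Complex.setIntegral_norm_rpow_lt_norm_pow hr hc, rpow_add hc]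
    ring
  · have hc : 1 - ‖z‖ ^ 2 ≤ 0 := by nlinarith [norm_nonneg z]
    have hempty : ∀ p : ℝ, {w : ℂ | ‖w‖ ^ p < 1 - ‖z‖ ^ 2} = ∅ := fun p =>
      eq_empty_of_forall_notMem fun w hw =>
        (rpow_nonneg (norm_nonneg w) p).not_gt (lt_of_lt_of_le hw hc)
    rw [indicator_of_notMem (by simpa using hz), hempty, setIntegral_empty, zero_mul, mul_zero]

theorem monomial_norm_sq_D2 (q r : ℝ) (hq : 0 < q) (hr : 0 < r) (α₁ α₂ α₃ : ℕ) :
    (∫ z in {z : ℂ × ℂ × ℂ |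
        ‖z.1‖ ^ (2:ℝ) + ‖z.2.1‖ ^ q < 1 ∧
        ‖z.1‖ ^ (2:ℝ) + ‖z.2.2‖ ^ r < 1},
      ‖z.1 ^ α₁ * z.2.1 ^ α₂ * z.2.2 ^ α₃‖ ^ 2) =
    π ^ 3 * Real.Gamma (α₁ + 1) *
      Real.Gamma ((2 * α₂ + 2) / q + (2 * α₃ + 2) / r + 1) /
      ((α₂ + 1) * (α₃ + 1) *
        Real.Gamma ((2 * α₂ + 2) / q + (2 * α₃ + 2) / r + α₁ + 2)) := by
  have hsplit : ∀ (x : ℂ) (y : ℂ × ℂ), ‖x ^ α₁ * y.1 ^ α₂ * y.2 ^ α₃‖ ^ 2 =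
      ‖x‖ ^ (2 * α₁) * (‖y.1‖ ^ (2 * α₂) * ‖y.2‖ ^ (2 * α₃)) := fun x y => by
    simp only [norm_mul, norm_pow, mul_pow, ← pow_mul']
    ring
  have hint : IntegrableOn (fun z : ℂ × ℂ × ℂ => ‖z.1 ^ α₁ * z.2.1 ^ α₂ * z.2.2 ^ α₃‖ ^ 2)
      (D2 q r) :=
    ((Continuous.continuousOn (by fun_prop)).integrableOn_compact
      (isCompact_closedBall 0 1)).mono_set (D2_subset_closedBall hq hr)
  have hE : 0 ≤ (2 * α₂ + 2 : ℝ) / q + (2 * α₃ + 2) / r := by positivity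
  change ∫ z in D2 q r, _ = _
  rw [Measure.volume_eq_prod,
    setIntegral_prod_eq_integral_setIntegral_slice (measurableSet_D2 q r) hint]
  simp only [hsplit, setIntegral_preimage_mk_D2 hq hr]
  push_cast
  rw [integral_indicator measurableSet_ball, integral_const_mul,
    Complex.setIntegral_ball_norm_pow_mul_one_sub_sq_rpow α₁ hE,
    show (α₁ : ℝ) + ((2 * α₂ + 2) / q + (2 * α₃ + 2) / r) + 2 =
      (2 * α₂ + 2) / q + (2 * α₃ + 2) / r + α₁ + 2 by ring]
  field_simp
end

section
/- For all positive reals q, r and all complex numbers x, y with |x| < 1 and |y| < 1, q r (1-x)(1-y) + 2q(1-x)(1+y) + 2r(1+x)(1-y) ≠ 0. -/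
/-!
Dividing by `(1 - x)(1 - y)` turns the expression into `q r + 2 q B + 2 r A` with
`A = (1 + x)/(1 - x)` and `B = (1 + y)/(1 - y)`. The Cayley transform `z ↦ (1 + z)/(1 - z)` maps
the open unit disc into the right half-plane, so this quantity has positive real part.
-/

namespace Complex

lemma one_sub_ne_zero_of_norm_lt_one {z : ℂ} (hz : ‖z‖ < 1) : 1 - z ≠ 0 :=
  sub_ne_zero.2 fun h => by simp [← h] at hz

/-- `Re ((1 + z)/(1 - z)) = (1 - ‖z‖²)/‖1 - z‖²`. -/
lemma re_one_add_div_one_sub_pos {z : ℂ} (hz : ‖z‖ < 1) : 0 < ((1 + z) / (1 - z)).re := by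
  have hden : 0 < normSq (1 - z) := normSq_pos.2 (one_sub_ne_zero_of_norm_lt_one hz)
  have hnum : 0 < 1 - normSq z := by
    rw [normSq_eq_norm_sq]
    nlinarith [norm_nonneg z]
  rw [div_re, ← add_div]
  refine div_pos ?_ hden
  simp only [add_re, add_im, sub_re, sub_im, one_re, one_im, normSq_apply] at hnum ⊢
  nlinarith

lemma re_ofReal_mul_add_pos {q r : ℝ} (hq : 0 < q) (hr : 0 < r) {A B : ℂ} (hA : 0 < A.re)
    (hB : 0 < B.re) : 0 < ((q : ℂ) * r + 2 * q * B + 2 * r * A).re := by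
  simp only [add_re, mul_re, mul_im, ofReal_re, ofReal_im, re_ofNat, im_ofNat, mul_zero, zero_mul,
    sub_zero, add_zero]
  linarith [mul_pos hq hB, mul_pos hr hA, mul_pos hq hr]

end Complex

open Complex in
theorem kernel_numerator_ne_zero (q r : ℝ) (hq : 0 < q) (hr : 0 < r) (x y : ℂ)
    (hx : ‖x‖ < 1) (hy : ‖y‖ < 1) :
    (q : ℂ) * r * (1 - x) * (1 - y) + 2 * q * (1 - x) * (1 + y) +
      2 * r * (1 + x) * (1 - y) ≠ 0 := by
  have hx₁ := one_sub_ne_zero_of_norm_lt_one hx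
  have hy₁ := one_sub_ne_zero_of_norm_lt_one hy
  have factor : (q : ℂ) * r * (1 - x) * (1 - y) + 2 * q * (1 - x) * (1 + y) +
      2 * r * (1 + x) * (1 - y) = (1 - x) * (1 - y) *
        ((q : ℂ) * r + 2 * q * ((1 + y) / (1 - y)) + 2 * r * ((1 + x) / (1 - x))) := by
    field_simp
  rw [factor]
  exact mul_ne_zero (mul_ne_zero hx₁ hy₁) <| ne_zero_of_re_pos <|
    re_ofReal_mul_add_pos hq hr (re_one_add_div_one_sub_pos hx) (re_one_add_div_one_sub_pos hy)
end

section
/- Let q, r > 0, ε ∈ (0,1), and set A = qr + 2q + 2r, B = -εqr - 2εq + 2εr, C = -εqr + 2εq - 2εr, D = ε²qr - 2ε²q - 2ε²r. Then for every real x with -1 ≤ x ≤ 1, (A·B - C·D)·x > C² + D² - A² - B². -/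
/-!
With `Q = q r + 2 q - 2 r` (so `B = -ε Q`), the difference of the two sides is `1 - ε²` times
`A² - x A (ε Q) + (ε Q)²`, a value of a binary quadratic form that is positive semidefinite for
`|x| ≤ 2`, plus `8 ε² q r (q (1 - x ε + ε²) + 2 (1 - ε²))`, which is positive since `x ε ≤ ε < 1`.
-/

theorem sq_sub_mul_mul_add_sq_nonneg {t : ℝ} (ht : |t| ≤ 2) (a b : ℝ) :
    0 ≤ a ^ 2 - t * a * b + b ^ 2 := by
  have hdisc : 0 ≤ 4 - t ^ 2 := by nlinarith [abs_nonneg t, sq_abs t]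
  nlinarith [sq_nonneg (2 * a - t * b), mul_nonneg hdisc (sq_nonneg b)]

theorem schur_cohn_inequality (q r ε : ℝ) (hq : 0 < q) (hr : 0 < r)
    (hε0 : 0 < ε) (hε1 : ε < 1) (x : ℝ) (hx1 : -1 ≤ x) (hx2 : x ≤ 1) :
    let A := q * r + 2 * q + 2 * r
    let B := -ε * q * r - 2 * ε * q + 2 * ε * r
    let C := -ε * q * r + 2 * ε * q - 2 * ε * r
    let D := ε ^ 2 * q * r - 2 * ε ^ 2 * q - 2 * ε ^ 2 * r
    (A * B - C * D) * x > C ^ 2 + D ^ 2 - A ^ 2 - B ^ 2 := by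
  intro A B C D
  set Q := q * r + 2 * q - 2 * r
  have identity : (A * B - C * D) * x - (C ^ 2 + D ^ 2 - A ^ 2 - B ^ 2)
      = (1 - ε ^ 2) * (A ^ 2 - x * A * (ε * Q) + (ε * Q) ^ 2)
        + 8 * ε ^ 2 * q * r * (q * (1 - x * ε + ε ^ 2) + 2 * (1 - ε ^ 2)) := by
    simp only [A, B, C, D, Q]
    ring
  have hε : 0 < 1 - ε ^ 2 := by nlinarith
  have hform : 0 ≤ A ^ 2 - x * A * (ε * Q) + (ε * Q) ^ 2 :=
    sq_sub_mul_mul_add_sq_nonneg ((abs_le.mpr ⟨hx1, hx2⟩).trans one_le_two) A (ε * Q)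
  have hxε : 0 < 1 - x * ε + ε ^ 2 := by nlinarith
  have : 0 < (A * B - C * D) * x - (C ^ 2 + D ^ 2 - A ^ 2 - B ^ 2) := by
    rw [identity]
    positivity
  linarith
end

section
/- Let D = {z ∈ ℂ³ : |z₁|² + |z₂|^q < 1, |z₁|² + |z₃|^r < 1} for q, r > 0 and let a ∈ ℂ with |a| < 1. The map φ(z) = ((z₁ - a)/(1 - ā z₁), (1-|a|²)^{1/q} z₂ /(1 - ā z₁)^{2/q}, (1-|a|²)^{1/r} z₃ /(1 - ā z₁)^{2/r}) maps D bijectively onto D. -/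
/-!
The first coordinate is the disc automorphism `z ↦ (z - a) / (1 - ā z)`, and the identity
`|1 - ā z|² = |z - a|² + (1 - |a|²)(1 - |z|²)` gives
`1 - |φ₁ z|² = (1 - |a|²)(1 - |z|²) / |1 - ā z|²`. The fibre coordinates are scaled so that
`|φ₂ z|^q = (1 - |a|²) |z₂|^q / |1 - ā z|²`, so each of the two defining inequalities of `D` is
preserved after multiplying by `|1 - ā z|²`. The map attached to `-a` is a two-sided inverse:
`1 + ā φ₁(z) = (1 - |a|²) / (1 - ā z)`, and since `Re (1 - ā z) > 0` the principal powers of this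
quotient split as quotients of powers.
-/

open Complex ComplexConjugate

namespace DiscFibration

lemma ofReal_mul_cpow {c : ℝ} (hc : 0 < c) {x : ℂ} (hx : x ≠ 0) (t : ℂ) :
    ((c : ℂ) * x) ^ t = (c : ℂ) ^ t * x ^ t := by
  have hc' : (c : ℂ) ≠ 0 := ofReal_ne_zero.mpr hc.ne'
  rw [cpow_def_of_ne_zero (mul_ne_zero hc' hx), log_ofReal_mul hc hx, ofReal_log hc.le,
    add_mul, exp_add, ← cpow_def_of_ne_zero hc', ← cpow_def_of_ne_zero hx]

lemma ofReal_div_cpow {c : ℝ} (hc : 0 < c) {x : ℂ} (hx : 0 < x.re) (t : ℂ) :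
    ((c : ℂ) / x) ^ t = (c : ℂ) ^ t / x ^ t := by
  have hx₀ : x ≠ 0 := fun h ↦ by simp [h] at hx
  have harg : x.arg ≠ Real.pi := fun h ↦ by linarith [(arg_eq_pi_iff.mp h).1]
  rw [div_eq_mul_inv, ofReal_mul_cpow hc (inv_ne_zero hx₀), inv_cpow _ _ harg, div_eq_mul_inv]

variable {a z : ℂ}

lemma norm_conj_mul_lt_one (ha : ‖a‖ < 1) (hz : ‖z‖ < 1) : ‖conj a * z‖ < 1 := by
  rw [norm_mul, norm_conj]
  exact mul_lt_one_of_nonneg_of_lt_one_left (norm_nonneg a) ha hz.le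

lemma re_one_sub_conj_mul_pos (ha : ‖a‖ < 1) (hz : ‖z‖ < 1) : 0 < (1 - conj a * z).re := by
  have := (re_le_norm (conj a * z)).trans_lt (norm_conj_mul_lt_one ha hz)
  simp only [sub_re, one_re]
  linarith

lemma one_sub_conj_mul_ne_zero (ha : ‖a‖ < 1) (hz : ‖z‖ < 1) : 1 - conj a * z ≠ 0 := fun h ↦ by
  simpa [h] using re_one_sub_conj_mul_pos ha hz

lemma norm_one_sub_conj_mul_sq (a z : ℂ) :
    ‖1 - conj a * z‖ ^ 2 = ‖z - a‖ ^ 2 + (1 - ‖a‖ ^ 2) * (1 - ‖z‖ ^ 2) := by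
  simp only [Complex.sq_norm]
  apply ofReal_injective
  push_cast
  simp only [← mul_conj, map_sub, map_mul, map_one, conj_conj]
  ring

lemma one_sub_norm_sq_pos (ha : ‖a‖ < 1) : 0 < 1 - ‖a‖ ^ 2 := by
  nlinarith [norm_nonneg a]

lemma ofReal_one_sub_norm_sq (a : ℂ) : ((1 - ‖a‖ ^ 2 : ℝ) : ℂ) = 1 - conj a * a := by
  push_cast
  rw [conj_mul']

noncomputable def mobius (a z : ℂ) : ℂ := (z - a) / (1 - conj a * z)

noncomputable def fiberMap (p : ℝ) (a z w : ℂ) : ℂ :=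
  (((1 - ‖a‖ ^ 2 : ℝ) ^ (1 / p : ℝ) : ℝ) : ℂ) * w / (1 - conj a * z) ^ ((2 / p : ℝ) : ℂ)

noncomputable def automorphism (q r : ℝ) (a : ℂ) (z : ℂ × ℂ × ℂ) : ℂ × ℂ × ℂ :=
  (mobius a z.1, fiberMap q a z.1 z.2.1, fiberMap r a z.1 z.2.2)

def egg (p : ℝ) : Set (ℂ × ℂ) := {x | ‖x.1‖ ^ (2 : ℝ) + ‖x.2‖ ^ p < 1}

def domain (q r : ℝ) : Set (ℂ × ℂ × ℂ) := {z | (z.1, z.2.1) ∈ egg q ∧ (z.1, z.2.2) ∈ egg r}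

variable {p : ℝ} {w : ℂ}

lemma one_sub_conj_neg_mul_mobius (ha : ‖a‖ < 1) (hz : ‖z‖ < 1) :
    1 - conj (-a) * mobius a z = ((1 - ‖a‖ ^ 2 : ℝ) : ℂ) / (1 - conj a * z) := by
  have hu := one_sub_conj_mul_ne_zero ha hz
  rw [ofReal_one_sub_norm_sq, mobius, map_neg]
  field_simp
  ring

lemma mobius_neg_mobius (ha : ‖a‖ < 1) (hz : ‖z‖ < 1) : mobius (-a) (mobius a z) = z := by
  have hu := one_sub_conj_mul_ne_zero ha hz
  have hc : 1 - conj a * a ≠ 0 := by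
    rw [← ofReal_one_sub_norm_sq]
    exact ofReal_ne_zero.mpr (one_sub_norm_sq_pos ha).ne'
  rw [mobius, one_sub_conj_neg_mul_mobius ha hz, mobius, ofReal_one_sub_norm_sq, sub_neg_eq_add,
    div_add' _ _ _ hu, div_div_div_cancel_right₀ hu, div_eq_iff hc]
  ring

lemma fiberMap_neg_fiberMap (ha : ‖a‖ < 1) (hz : ‖z‖ < 1) :
    fiberMap p (-a) (mobius a z) (fiberMap p a z w) = w := by
  have hc := one_sub_norm_sq_pos ha
  have hu : (1 - conj a * z) ^ ((2 / p : ℝ) : ℂ) ≠ 0 := by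
    simp [cpow_eq_zero_iff, one_sub_conj_mul_ne_zero ha hz]
  have hs : (((1 - ‖a‖ ^ 2 : ℝ) ^ (1 / p : ℝ) : ℝ) : ℂ) ≠ 0 :=
    ofReal_ne_zero.mpr (Real.rpow_pos_of_pos hc _).ne'
  have hsq : (((1 - ‖a‖ ^ 2 : ℝ) ^ (1 / p : ℝ) : ℝ) : ℂ) ^ 2
      = ((1 - ‖a‖ ^ 2 : ℝ) : ℂ) ^ ((2 / p : ℝ) : ℂ) := by
    rw [← ofReal_cpow hc.le, ← ofReal_pow, ← Real.rpow_natCast, ← Real.rpow_mul hc.le]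
    ring_nf
  rw [fiberMap, norm_neg, one_sub_conj_neg_mul_mobius ha hz,
    ofReal_div_cpow hc (re_one_sub_conj_mul_pos ha hz), fiberMap, ← hsq]
  field_simp

lemma norm_fiberMap_rpow (hp : p ≠ 0) (ha : ‖a‖ ≤ 1) :
    ‖fiberMap p a z w‖ ^ p = (1 - ‖a‖ ^ 2) * ‖w‖ ^ p / ‖1 - conj a * z‖ ^ 2 := by
  have hc : 0 ≤ 1 - ‖a‖ ^ 2 := by nlinarith [norm_nonneg a]
  rw [fiberMap, norm_div, norm_mul, norm_real, norm_cpow_real,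
    Real.norm_of_nonneg (Real.rpow_nonneg hc _), Real.div_rpow (by positivity) (by positivity),
    Real.mul_rpow (by positivity) (norm_nonneg w), ← Real.rpow_mul hc,
    ← Real.rpow_mul (norm_nonneg _), one_div_mul_cancel hp, Real.rpow_one,
    div_mul_cancel₀ _ hp, Real.rpow_two]

lemma norm_lt_one_of_mem_egg {x : ℂ × ℂ} (hx : x ∈ egg p) : ‖x.1‖ < 1 := by
  have : ‖x.1‖ ^ (2 : ℝ) < 1 := by
    linarith [hx.out, Real.rpow_nonneg (norm_nonneg x.2) p]
  rwa [Real.rpow_two, sq_lt_one_iff₀ (norm_nonneg _)] at this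

lemma mobius_fiberMap_mem_egg_iff (hp : p ≠ 0) (ha : ‖a‖ < 1) (hz : ‖z‖ < 1) :
    (mobius a z, fiberMap p a z w) ∈ egg p ↔ (z, w) ∈ egg p := by
  have hu := pow_pos (norm_pos_iff.mpr (one_sub_conj_mul_ne_zero ha hz)) 2
  simp only [egg, Set.mem_ofPred_eq]
  rw [norm_fiberMap_rpow hp ha.le, Real.rpow_two, Real.rpow_two, mobius, norm_div, div_pow,
    ← add_div, div_lt_one hu, norm_one_sub_conj_mul_sq, add_lt_add_iff_left,
    mul_lt_mul_iff_right₀ (one_sub_norm_sq_pos ha)]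
  exact lt_sub_iff_add_lt'

variable {q r : ℝ}

lemma mapsTo_automorphism (hq : q ≠ 0) (hr : r ≠ 0) (ha : ‖a‖ < 1) :
    Set.MapsTo (automorphism q r a) (domain q r) (domain q r) := fun _ ⟨hzq, hzr⟩ ↦
  have hz := norm_lt_one_of_mem_egg hzq
  ⟨(mobius_fiberMap_mem_egg_iff hq ha hz).2 hzq, (mobius_fiberMap_mem_egg_iff hr ha hz).2 hzr⟩

lemma leftInvOn_automorphism_neg (ha : ‖a‖ < 1) :
    Set.LeftInvOn (automorphism q r (-a)) (automorphism q r a) (domain q r) := by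
  rintro z ⟨hzq, -⟩
  have hz := norm_lt_one_of_mem_egg hzq
  simp only [automorphism, mobius_neg_mobius ha hz, fiberMap_neg_fiberMap ha hz]

end DiscFibration

open DiscFibration in
theorem automorphism_bijOn (q r : ℝ) (hq : 0 < q) (hr : 0 < r) (a : ℂ) (ha : ‖a‖ < 1) :
    Set.BijOn
      (fun z : ℂ × ℂ × ℂ =>
        ((z.1 - a) / (1 - (starRingEnd ℂ) a * z.1),
         (((1 - ‖a‖ ^ 2 : ℝ) ^ (1 / q : ℝ) : ℝ) : ℂ) * z.2.1 /
           (1 - (starRingEnd ℂ) a * z.1) ^ ((2 / q : ℝ) : ℂ),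
         (((1 - ‖a‖ ^ 2 : ℝ) ^ (1 / r : ℝ) : ℝ) : ℂ) * z.2.2 /
           (1 - (starRingEnd ℂ) a * z.1) ^ ((2 / r : ℝ) : ℂ)))
      {z : ℂ × ℂ × ℂ |
        ‖z.1‖ ^ (2:ℝ) + ‖z.2.1‖ ^ q < 1 ∧
        ‖z.1‖ ^ (2:ℝ) + ‖z.2.2‖ ^ r < 1}
      {z : ℂ × ℂ × ℂ |
        ‖z.1‖ ^ (2:ℝ) + ‖z.2.1‖ ^ q < 1 ∧
        ‖z.1‖ ^ (2:ℝ) + ‖z.2.2‖ ^ r < 1} := by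
  have ha' : ‖-a‖ < 1 := by rwa [norm_neg]
  have hinv : Set.LeftInvOn (automorphism q r a) (automorphism q r (-a)) (domain q r) := by
    simpa only [neg_neg] using leftInvOn_automorphism_neg ha'
  exact Set.InvOn.bijOn ⟨leftInvOn_automorphism_neg ha, hinv⟩
    (mapsTo_automorphism hq.ne' hr.ne' ha) (mapsTo_automorphism hq.ne' hr.ne' ha')
end

section
/- For every real r > 0 and every ε ∈ (0,1), the quadratic polynomial f(s) = (r² + 6r + 8) s² + ε(−2r² − 6r + 4) s + ε² r² has both of its complex roots in the open unit disc. -/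
/-! A real quadratic `a s² + b s + c` with `a > 0` satisfying the Jury conditions `c < a`,
`a + b + c > 0`, `a - b + c > 0` has its roots in the open unit disc. A non-real root `s` comes
with its conjugate, so Vieta gives `a ‖s‖² = c < a`. A real root `x ≥ 1` would force
`(x - 1)(a (x + 1) + b) = -(a + b + c) < 0`, hence `b < -a (x + 1)` and `c > -a - b > a`;
`x ≤ -1` is symmetric. For the theorem it remains to check the Jury conditions, which reduce to
`a + b + c = r²(1 - ε)² + 6r(1 - ε) + 8 + 4ε` and `a - b + c = r²(1 + ε)² + 6r(1 + ε) + 8 - 4ε`. -/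

lemma abs_lt_one_of_quadratic_eq_zero {a b c x : ℝ} (ha : 0 < a) (hca : c < a)
    (hpos : 0 < a + b + c) (hneg : 0 < a - b + c) (hx : a * x ^ 2 + b * x + c = 0) :
    |x| < 1 := by
  rw [abs_lt]
  constructor
  · by_contra! h
    nlinarith [mul_nonneg ha.le (by linarith : (0 : ℝ) ≤ -x - 1)]
  · by_contra! h
    nlinarith [mul_nonneg ha.le (by linarith : (0 : ℝ) ≤ x - 1)]

lemma Complex.mul_normSq_eq_of_quadratic_eq_zero {a b c : ℝ} {s : ℂ}
    (hs : (a : ℂ) * s ^ 2 + b * s + c = 0) (him : s.im ≠ 0) : a * Complex.normSq s = c := by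
  have hs_re := congrArg Complex.re hs
  have hs_im := congrArg Complex.im hs
  simp only [pow_two, Complex.add_re, Complex.add_im, Complex.mul_re, Complex.mul_im,
    Complex.ofReal_re, Complex.ofReal_im, Complex.zero_re, Complex.zero_im] at hs_re hs_im
  have hsum : 2 * a * s.re + b = 0 := by
    apply mul_left_cancel₀ him
    linarith
  rw [Complex.normSq_apply]
  linear_combination s.re * hsum - hs_re

theorem Complex.norm_lt_one_of_quadratic_eq_zero {a b c : ℝ} (ha : 0 < a) (hca : c < a)
    (hpos : 0 < a + b + c) (hneg : 0 < a - b + c) {s : ℂ}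
    (hs : (a : ℂ) * s ^ 2 + b * s + c = 0) : ‖s‖ < 1 := by
  by_cases him : s.im = 0
  · have hreal : s = (s.re : ℂ) := Complex.ext rfl (by simp [him])
    rw [hreal] at hs ⊢
    rw [Complex.norm_real, Real.norm_eq_abs]
    exact abs_lt_one_of_quadratic_eq_zero ha hca hpos hneg (by exact_mod_cast hs)
  · have hnormSq : Complex.normSq s < 1 := by
      have := mul_normSq_eq_of_quadratic_eq_zero hs him
      nlinarith
    rw [← Complex.sq_norm] at hnormSq
    nlinarith [norm_nonneg s]

theorem quadratic_roots_in_disc (r ε : ℝ) (hr : 0 < r) (hε0 : 0 < ε) (hε1 : ε < 1) :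
    ∀ s : ℂ, ((r : ℂ) ^ 2 + 6 * r + 8) * s ^ 2 +
        (ε : ℂ) * (-2 * r ^ 2 - 6 * r + 4) * s + (ε : ℂ) ^ 2 * r ^ 2 = 0 →
      ‖s‖ < 1 := by
  intro s hs
  have hε_sq : ε ^ 2 < 1 := by nlinarith
  apply Complex.norm_lt_one_of_quadratic_eq_zero (a := r ^ 2 + 6 * r + 8)
    (b := ε * (-2 * r ^ 2 - 6 * r + 4)) (c := ε ^ 2 * r ^ 2)
  · positivity
  · nlinarith [mul_pos hr hr]
  · nlinarith [sq_nonneg (r * (1 - ε)), mul_pos hr (sub_pos.mpr hε1)]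
  · nlinarith [sq_nonneg (r * (1 + ε)), mul_pos hr hε0]
  · push_cast
    linear_combination hs
end

section
/- For positive reals q, r define G(x,y) = q²(x−1)²(−2r²y + (r−2)(r−1)y² + (r+3)r + 8y + 2) − qr(x²−1)(y−1)(3r(y−1) − 4(y+1)) + 2r²(x(x+4)+1)(y−1)². Then for q = r, G has a zero (x₀, y₀) with |x₀| < 1 and |y₀| < 1. -/
/-!
The Cayley transform `u ↦ (1 - u) / (1 + u)` maps the right half-plane onto the unit disc, and
after clearing denominators `G r r` becomes `16 r²` times the quartic `cayleyPoly r u v`. On the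
antidiagonal `v = conj u` with `u = s + t i` that quartic is real, equal to
`10 s² - 2 t² + 6 r s ρ + (r² - 2) ρ²` with `ρ = s² + t²`. Taking `s = 2ρ` makes this
`ρ (ρ ((r + 6)² + 10) - 2)`, so `ρ = 2 / ((r + 6)² + 10)` gives a zero with `s > 0`, and
`t² = ρ - 4ρ² ≥ 0` because `ρ ≤ 1/4`.
-/

open Complex ComplexConjugate

def G {R : Type*} [CommRing R] (q r x y : R) : R :=
  q ^ 2 * (x - 1) ^ 2 * (-2 * r ^ 2 * y + (r - 2) * (r - 1) * y ^ 2 + (r + 3) * r + 8 * y + 2) -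
    q * r * (x ^ 2 - 1) * (y - 1) * (3 * r * (y - 1) - 4 * (y + 1)) +
    2 * r ^ 2 * (x * (x + 4) + 1) * (y - 1) ^ 2

def cayleyPoly {R : Type*} [CommRing R] (r u v : R) : R :=
  3 * u ^ 2 + 4 * u * v + 3 * v ^ 2 + 3 * r * u * v * (u + v) + (r ^ 2 - 2) * u ^ 2 * v ^ 2

theorem G_cayley {K : Type*} [Field K] (r : K) {u v : K} (hu : 1 + u ≠ 0) (hv : 1 + v ≠ 0) :
    G r r ((1 - u) / (1 + u)) ((1 - v) / (1 + v)) =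
      16 * r ^ 2 * cayleyPoly r u v / ((1 + u) ^ 2 * (1 + v) ^ 2) := by
  rw [eq_div_iff (by positivity)]
  unfold G cayleyPoly
  field_simp
  ring

theorem one_add_ne_zero_of_re_pos {u : ℂ} (hu : 0 < u.re) : 1 + u ≠ 0 := by
  intro h
  have := congrArg re h
  simp only [add_re, one_re, zero_re] at this
  linarith

theorem norm_cayley_lt_one {u : ℂ} (hu : 0 < u.re) : ‖(1 - u) / (1 + u)‖ < 1 := by
  have h : ‖1 - u‖ < ‖1 + u‖ := by
    rw [← sq_lt_sq₀ (norm_nonneg _) (norm_nonneg _), Complex.sq_norm, Complex.sq_norm,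
      Complex.normSq_apply, Complex.normSq_apply]
    simp only [sub_re, add_re, one_re, sub_im, add_im, one_im]
    nlinarith
  rw [norm_div, div_lt_one ((norm_nonneg _).trans_lt h)]
  exact h

theorem cayleyPoly_conj (r : ℝ) (u : ℂ) :
    cayleyPoly (r : ℂ) u (conj u) =
      ((10 * u.re ^ 2 - 2 * u.im ^ 2 + 6 * r * u.re * normSq u +
        (r ^ 2 - 2) * normSq u ^ 2 : ℝ) : ℂ) := by
  apply Complex.ext <;> simp [cayleyPoly, normSq_apply, pow_two] <;> ring

theorem exists_re_pos_cayleyPoly_conj_eq_zero (r : ℝ) :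
    ∃ u : ℂ, 0 < u.re ∧ cayleyPoly (r : ℂ) u (conj u) = 0 := by
  set ρ : ℝ := 2 / ((r + 6) ^ 2 + 10)
  have hρ0 : 0 < ρ := by positivity
  have hρD : ρ * ((r + 6) ^ 2 + 10) = 2 := div_mul_cancel₀ _ (by positivity)
  have hρ4 : 4 * ρ ≤ 1 := by nlinarith
  refine ⟨⟨2 * ρ, √(ρ - (2 * ρ) ^ 2)⟩, by simpa using hρ0, ?_⟩
  have ht : √(ρ - (2 * ρ) ^ 2) ^ 2 = ρ - (2 * ρ) ^ 2 := Real.sq_sqrt (by nlinarith)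
  have hnormSq : normSq ⟨2 * ρ, √(ρ - (2 * ρ) ^ 2)⟩ = ρ := by
    rw [normSq_apply]; simp only; nlinarith
  rw [cayleyPoly_conj, hnormSq]
  simp only [ht]
  norm_cast
  linear_combination ρ * hρD

theorem G_has_zero_in_bidisc_general (r : ℝ) :
    ∃ x y : ℂ, ‖x‖ < 1 ∧ ‖y‖ < 1 ∧
      (r : ℂ) ^ 2 * (x - 1) ^ 2 *
          (-2 * r ^ 2 * y + ((r : ℂ) - 2) * (r - 1) * y ^ 2 + (r + 3) * r + 8 * y + 2) -
        (r : ℂ) * r * (x ^ 2 - 1) * (y - 1) * (3 * r * (y - 1) - 4 * (y + 1)) +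
        2 * (r : ℂ) ^ 2 * (x * (x + 4) + 1) * (y - 1) ^ 2 = 0 := by
  obtain ⟨u, hu, hzero⟩ := exists_re_pos_cayleyPoly_conj_eq_zero r
  have hu' : 0 < (conj u).re := by rwa [conj_re]
  refine ⟨_, _, norm_cayley_lt_one hu, norm_cayley_lt_one hu', ?_⟩
  change G (r : ℂ) r _ _ = 0
  rw [G_cayley _ (one_add_ne_zero_of_re_pos hu) (one_add_ne_zero_of_re_pos hu'), hzero]
  simp

theorem G_has_zero_in_bidisc (r : ℝ) (hr : 0 < r) :
    ∃ x y : ℂ, ‖x‖ < 1 ∧ ‖y‖ < 1 ∧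
      (r : ℂ) ^ 2 * (x - 1) ^ 2 *
          (-2 * r ^ 2 * y + ((r : ℂ) - 2) * (r - 1) * y ^ 2 + (r + 3) * r + 8 * y + 2) -
        (r : ℂ) * r * (x ^ 2 - 1) * (y - 1) * (3 * r * (y - 1) - 4 * (y + 1)) +
        2 * (r : ℂ) ^ 2 * (x * (x + 4) + 1) * (y - 1) ^ 2 = 0 :=
  G_has_zero_in_bidisc_general r
end
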